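/- Let Λ = ℤ ⊕ U³ ⊕ ℤ be the Mukai lattice of an abelian surface, and let γ̃ be an isometry of Λ fixing (1,0,−1). Then there exist m ∈ ℤ and α ∈ U³ with (α,α) = 2m(m+1) such that γ̃(1,0,1) = (2m+1, 2α, 2m+1), γ̃(1,0,0) = (m+1, α, m) and γ̃(0,0,1) = (m, α, m+1). Moreover the content of α (the gcd of its coordinates in a basis of U³) is coprime to 2m+1; equivalently, (2m+1, 2α, 2m+1) is primitive in Λ. -/

import Mathlib

open Matrix

/-- The ℝ-bilinear extension of the integral bilinear form with Gram matrix `M`. -/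
def bilinR {ι : Type*} [Fintype ι] (M : Matrix ι ι ℤ) (x y : ι → ℝ) : ℝ :=
  x ⬝ᵥ ((M.map (Int.cast : ℤ → ℝ)) *ᵥ y)

/-- `w` is a tuple of vectors of `L ⊗ ℝ` spanning a maximal positive definite subspace:
its Gram matrix is positive definite and no longer tuple has positive definite Gram matrix. -/
def IsMaxPosTuple {ι : Type*} [Fintype ι] (M : Matrix ι ι ℤ) {k : ℕ}
    (w : Fin k → ι → ℝ) : Prop :=
  (Matrix.of fun i j => bilinR M (w i) (w j)).PosDef ∧
    ∀ w' : Fin (k + 1) → ι → ℝ,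
      ¬ (Matrix.of fun i j => bilinR M (w' i) (w' j)).PosDef

/-- `g` preserves the orientation of the positive cone of the lattice with Gram matrix `M`:
for every basis `w` of a maximal positive definite subspace `W` of `L ⊗ ℝ`, the determinant of
the matrix `(B(wᵢ, g wⱼ))` (which equals, up to the positive factor `det (Gram w)`, the
determinant of the orthogonal projection of `g|_W` back to `W`) is positive. -/
def OrientPres {ι : Type*} [Fintype ι] (M : Matrix ι ι ℤ) (g : Matrix ι ι ℤ) : Prop :=
  ∀ (k : ℕ) (w : Fin k → ι → ℝ), IsMaxPosTuple M w →
    0 < (Matrix.of fun i j : Fin k =>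
          bilinR M (w i) ((g.map (Int.cast : ℤ → ℝ)) *ᵥ w j)).det

/-- `g` is an isometry of the lattice with Gram matrix `M`. -/
def IsIsometry {ι : Type*} [Fintype ι] (M : Matrix ι ι ℤ) (g : Matrix ι ι ℤ) : Prop :=
  gᵀ * M * g = M

/-- A vector of a lattice is primitive if it is divisible only by units. -/
def IsPrimitiveVec {ι : Type*} (l : ι → ℤ) : Prop :=
  ∀ (c : ℤ) (x : ι → ℤ), l = c • x → IsUnit c

/-- The Gram matrix of the Mukai lattice `Λ = ℤ ⊕ U³ ⊕ ℤ` of an abelian surface, in the basis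
`(H⁰-generator, e₁, f₁, e₂, f₂, e₃, f₃, H⁴-generator)`, with Mukai pairing
`((r,α,s),(r',α',s')) = (α,α') - rs' - r's`. -/
def MukaiG : Matrix (Fin 8) (Fin 8) ℤ :=
  !![0,0,0,0,0,0,0,-1;
     0,0,1,0,0,0,0,0;
     0,1,0,0,0,0,0,0;
     0,0,0,0,1,0,0,0;
     0,0,0,1,0,0,0,0;
     0,0,0,0,0,0,1,0;
     0,0,0,0,0,1,0,0;
     -1,0,0,0,0,0,0,0]

/-- The Gram matrix of `U³` in the basis `e₁, f₁, e₂, f₂, e₃, f₃`. -/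
def U3G : Matrix (Fin 6) (Fin 6) ℤ :=
  !![0,1,0,0,0,0;
     1,0,0,0,0,0;
     0,0,0,1,0,0;
     0,0,1,0,0,0;
     0,0,0,0,0,1;
     0,0,0,0,1,0]

/-- The Mukai vector `(r, α, s) ∈ ℤ ⊕ U³ ⊕ ℤ`. -/
def mk (r : ℤ) (α : Fin 6 → ℤ) (s : ℤ) : Fin 8 → ℤ :=
  ![r, α 0, α 1, α 2, α 3, α 4, α 5, s]

/-! Since `γ̃` is an isometry fixing `(1,0,-1)`, the vector `γ̃(1,0,0) = (r, α, s)` has the same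
pairings as `(1,0,0)`: pairing with `(1,0,-1)` gives `r - s = 1`, and its square gives
`(α,α) = 2rs`. Linearity then determines `γ̃(0,0,1)` and `γ̃(1,0,1)`. As `(1,0,1)` is primitive
and `γ̃` is unimodular, so is its image, and any common divisor of the content of `α` and
`2m+1` divides all of its coordinates. -/

section Lattice

variable {ι : Type*}

theorem IsIsometry.dotProduct_mulVec_mulVec [Fintype ι] {M G : Matrix ι ι ℤ}
    (h : IsIsometry M G) (x y : ι → ℤ) :
    (G *ᵥ x) ⬝ᵥ (M *ᵥ (G *ᵥ y)) = x ⬝ᵥ (M *ᵥ y) := by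
  rw [Matrix.mulVec_mulVec, Matrix.dotProduct_mulVec, ← Matrix.vecMul_transpose,
    Matrix.vecMul_vecMul, ← Matrix.mul_assoc, h, ← Matrix.dotProduct_mulVec]

theorem isPrimitiveVec_of_isUnit_apply {l : ι → ℤ} (i : ι) (hi : IsUnit (l i)) :
    IsPrimitiveVec l := by
  rintro c x rfl
  exact isUnit_of_mul_isUnit_left hi

theorem IsPrimitiveVec.mulVec [Fintype ι] [DecidableEq ι] {l : ι → ℤ} (hl : IsPrimitiveVec l)
    {G : Matrix ι ι ℤ} (hG : IsUnit G.det) : IsPrimitiveVec (G *ᵥ l) := by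
  intro c x hx
  refine hl c (G⁻¹ *ᵥ x) ?_
  rw [← Matrix.mulVec_smul, ← hx, Matrix.mulVec_mulVec, Matrix.nonsing_inv_mul G hG,
    Matrix.one_mulVec]

theorem IsPrimitiveVec.isUnit_of_forall_dvd {l : ι → ℤ} (hl : IsPrimitiveVec l) {d : ℤ}
    (hd : ∀ i, d ∣ l i) : IsUnit d :=
  hl d (fun i => l i / d) (funext fun i => (Int.mul_ediv_cancel' (hd i)).symm)

end Lattice

section Mukai

theorem mk_add (r r' : ℤ) (α α' : Fin 6 → ℤ) (s s' : ℤ) :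
    mk r α s + mk r' α' s' = mk (r + r') (α + α') (s + s') := by
  ext i; fin_cases i <;> simp [mk]

theorem mk_sub (r r' : ℤ) (α α' : Fin 6 → ℤ) (s s' : ℤ) :
    mk r α s - mk r' α' s' = mk (r - r') (α - α') (s - s') := by
  ext i; fin_cases i <;> simp [mk]

theorem exists_eq_mk (v : Fin 8 → ℤ) : ∃ r α s, v = mk r α s :=
  ⟨v 0, ![v 1, v 2, v 3, v 4, v 5, v 6], v 7, by ext i; fin_cases i <;> rfl⟩

theorem mk_dotProduct_mulVec_mk (r r' : ℤ) (α α' : Fin 6 → ℤ) (s s' : ℤ) :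
    mk r α s ⬝ᵥ (MukaiG *ᵥ mk r' α' s') = α ⬝ᵥ (U3G *ᵥ α') - r * s' - r' * s := by
  simp [mk, MukaiG, U3G, Matrix.mulVec, dotProduct, Fin.sum_univ_succ]
  ring

theorem IsPrimitiveVec.isCoprime_gcd_of_mk (k : ℤ) {r : ℤ} {α : Fin 6 → ℤ}
    (h : IsPrimitiveVec (mk r (k • α) r)) : IsCoprime (Finset.univ.gcd α) r := by
  rw [← gcd_isUnit_iff (R := ℤ)]
  have hα (i : Fin 6) : gcd (Finset.univ.gcd α) r ∣ (k • α) i :=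
    ((gcd_dvd_left _ _).trans (Finset.gcd_dvd (Finset.mem_univ i))).mul_left k
  refine h.isUnit_of_forall_dvd fun i => ?_
  fin_cases i
  exacts [gcd_dvd_right _ _, hα 0, hα 1, hα 2, hα 3, hα 4, hα 5, gcd_dvd_right _ _]

end Mukai

/-- Any isometry `γ̃` of the Mukai lattice `Λ = ℤ ⊕ U³ ⊕ ℤ` fixing `(1,0,-1)` satisfies
`γ̃(1,0,1) = (2m+1, 2α, 2m+1)`, `γ̃(1,0,0) = (m+1, α, m)` and `γ̃(0,0,1) = (m, α, m+1)` for
some `m ∈ ℤ` and `α ∈ U³` with `(α,α) = 2m(m+1)`; moreover the content of `α` is coprime to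
`2m+1`, equivalently `(2m+1, 2α, 2m+1)` is primitive in `Λ`. -/
theorem stmt_9 (G : Matrix (Fin 8) (Fin 8) ℤ)
    (hiso : IsIsometry MukaiG G) (hunit : IsUnit G.det)
    (hfix : G *ᵥ mk 1 0 (-1) = mk 1 0 (-1)) :
    ∃ (m : ℤ) (α : Fin 6 → ℤ),
      α ⬝ᵥ (U3G *ᵥ α) = 2 * m * (m + 1) ∧
      G *ᵥ mk 1 0 1 = mk (2 * m + 1) ((2 : ℤ) • α) (2 * m + 1) ∧
      G *ᵥ mk 1 0 0 = mk (m + 1) α m ∧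
      G *ᵥ mk 0 0 1 = mk m α (m + 1) ∧
      IsCoprime (Finset.univ.gcd α) (2 * m + 1) ∧
      IsPrimitiveVec (mk (2 * m + 1) ((2 : ℤ) • α) (2 * m + 1)) := by
  obtain ⟨r, α, m, h100⟩ := exists_eq_mk (G *ᵥ mk 1 0 0)
  have hr : r - m = 1 := by
    have h := hiso.dotProduct_mulVec_mulVec (mk 1 0 0) (mk 1 0 (-1))
    simp only [h100, hfix, mk_dotProduct_mulVec_mk, Matrix.mulVec_zero, dotProduct_zero] at h
    linarith
  obtain rfl : r = m + 1 := by omega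
  have hα : α ⬝ᵥ (U3G *ᵥ α) = 2 * m * (m + 1) := by
    have h := hiso.dotProduct_mulVec_mulVec (mk 1 0 0) (mk 1 0 0)
    simp only [h100, mk_dotProduct_mulVec_mk, Matrix.mulVec_zero, dotProduct_zero] at h
    linarith
  have h001 : G *ᵥ mk 0 0 1 = mk m α (m + 1) := by
    have h : mk 0 0 1 = mk 1 0 0 - mk 1 0 (-1) := by rw [mk_sub]; norm_num
    rw [h, Matrix.mulVec_sub, h100, hfix, mk_sub]
    congr 1 <;> simp
  have h101 : G *ᵥ mk 1 0 1 = mk (2 * m + 1) ((2 : ℤ) • α) (2 * m + 1) := by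
    have h : mk 1 0 1 = mk 1 0 0 + mk 0 0 1 := by rw [mk_add]; norm_num
    rw [h, Matrix.mulVec_add, h100, h001, mk_add, two_smul]
    congr 1 <;> ring
  have hprim : IsPrimitiveVec (mk (2 * m + 1) ((2 : ℤ) • α) (2 * m + 1)) :=
    h101 ▸ (isPrimitiveVec_of_isUnit_apply 0 isUnit_one).mulVec hunit
  exact ⟨m, α, hα, h101, h100, h001, hprim.isCoprime_gcd_of_mk 2, hprim⟩
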